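/- Let Λ = {λ_n} be a sequence of distinct points in the open unit disk 𝔻 satisfying the Blaschke condition which is an interpolating sequence for H^∞, and let Λ = Λ₀ ∪ Λ₁ be any partition of Λ into two disjoint subsets with Blaschke products B₀ and B₁ respectively. Then there exists η > 0 such that |B₀(μ)| ≥ η for every μ ∈ Λ₁ and |B₁(μ)| ≥ η for every μ ∈ Λ₀. -/

import Mathlib

/-- The normalized Möbius transform `b_λ(z)`; for `λ = 0` it is `z`. -/
noncomputable def moeb (l z : ℂ) : ℂ :=
  if l = 0 then z
  else ((‖l‖ : ℂ) / l) * ((z - l) / (1 - (starRingEnd ℂ) l * z))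

/-- The open unit disk. -/
def unitDisk : Set ℂ := Metric.ball 0 1

/-- The Blaschke product of the subsequence of `Λ` indexed by `S`. -/
noncomputable def bprod (Λ : ℕ → ℂ) (S : Set ℕ) (z : ℂ) : ℂ :=
  ∏' n : S, moeb (Λ n) z

/-- The pseudohyperbolic disk `D(λ, δ)`. -/
def phDisk (l : ℂ) (δ : ℝ) : Set ℂ := {z ∈ unitDisk | ‖moeb l z‖ < δ}

/-- A bounded analytic function on the unit disk. -/
def BoundedAnalyticOnDisk (f : ℂ → ℂ) : Prop :=
  DifferentiableOn ℂ f unitDisk ∧ ∃ C : ℝ, ∀ z ∈ unitDisk, ‖f z‖ ≤ C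

/-- `Λ` is an interpolating sequence for `H^∞`. -/
def IsInterpolatingSeq (Λ : ℕ → ℂ) : Prop :=
  ∀ v : ℕ → ℂ, (∃ C : ℝ, ∀ n, ‖v n‖ ≤ C) →
    ∃ f : ℂ → ℂ, BoundedAnalyticOnDisk f ∧ ∀ n, f (Λ n) = v n

/-- `Λ` is a weak interpolating sequence for `H^∞`. -/
def IsWeakInterpolatingSeq (Λ : ℕ → ℂ) : Prop :=
  ∃ φ : ℕ → ℂ → ℂ, ∃ C : ℝ,
    (∀ n, DifferentiableOn ℂ (φ n) unitDisk) ∧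
    (∀ n k, φ n (Λ k) = if n = k then 1 else 0) ∧
    (∀ n, ∀ z ∈ unitDisk, ‖φ n z‖ ≤ C)

/-- The Carleson condition for `Λ`. -/
def CarlesonCond (Λ : ℕ → ℂ) : Prop :=
  ∃ δc : ℝ, 0 < δc ∧ ∀ n, δc ≤ ∏' k : {k : ℕ // k ≠ n}, ‖moeb (Λ k) (Λ n)‖

/-!
Interpolate the indicator of `Λ₁`: a bounded analytic `f` with `‖f‖ ≤ C` on the disk, `f = 1` on
`Λ₁` and `f = 0` on `Λ₀`. Moving a zero `a` of `f` to the origin and applying the Schwarz lemma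
gives `f = b_a g` with `‖g‖ ≤ C`; dividing out finitely many zeros this way yields
`‖f z‖ ≤ C ∏ ‖b_λ(z)‖` over any finite part of `Λ₀`. At `μ ∈ Λ₁` every partial product of
`B₀(μ)` therefore has modulus at least `1 / C`, and so does the infinite product.
-/

open Metric Set ComplexConjugate

noncomputable def mobius (a z : ℂ) : ℂ := (z - a) / (1 - conj a * z)

section Mobius

variable {a z : ℂ}

lemma one_sub_conj_mul_ne_zero (ha : ‖a‖ < 1) (hz : ‖z‖ < 1) : 1 - conj a * z ≠ 0 := by
  rw [sub_ne_zero]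
  refine fun h => (?_ : ‖conj a * z‖ < 1).ne' (by rw [← h, norm_one])
  rw [norm_mul, Complex.norm_conj]
  nlinarith [norm_nonneg a, norm_nonneg z]

lemma norm_mobius_lt_one (ha : ‖a‖ < 1) (hz : ‖z‖ < 1) : ‖mobius a z‖ < 1 := by
  have hd := one_sub_conj_mul_ne_zero ha hz
  have hid : Complex.normSq (1 - conj a * z) - Complex.normSq (z - a)
      = (1 - Complex.normSq a) * (1 - Complex.normSq z) := by
    simp only [Complex.normSq_apply, Complex.mul_re, Complex.mul_im, Complex.sub_re,
      Complex.sub_im, Complex.one_re, Complex.one_im, Complex.conj_re, Complex.conj_im]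
    ring
  have ha' : Complex.normSq a < 1 := by rw [← Complex.sq_norm]; nlinarith [norm_nonneg a]
  have hz' : Complex.normSq z < 1 := by rw [← Complex.sq_norm]; nlinarith [norm_nonneg z]
  have hlt : Complex.normSq (z - a) < Complex.normSq (1 - conj a * z) := by nlinarith
  rw [mobius, norm_div, div_lt_one (norm_pos_iff.2 hd), Complex.norm_def, Complex.norm_def]
  exact Real.sqrt_lt_sqrt (Complex.normSq_nonneg _) hlt

lemma mobius_neg_mobius (ha : ‖a‖ < 1) (hz : ‖z‖ < 1) : mobius (-a) (mobius a z) = z := by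
  have hd := one_sub_conj_mul_ne_zero ha hz
  have haa := one_sub_conj_mul_ne_zero ha ha
  have hsum : mobius a z + a = z * (1 - conj a * a) / (1 - conj a * z) := by
    rw [mobius, div_add' _ _ _ hd]; ring
  have hden : 1 + conj a * mobius a z = (1 - conj a * a) / (1 - conj a * z) := by
    rw [mobius, mul_div_assoc', one_add_div hd]; ring
  rw [mobius, map_neg, neg_mul, sub_neg_eq_add, sub_neg_eq_add, hsum, hden,
    div_div_div_cancel_right₀ hd, mul_div_cancel_right₀ _ haa]

lemma mobius_eq_zero_iff (ha : ‖a‖ < 1) (hz : ‖z‖ < 1) : mobius a z = 0 ↔ z = a := by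
  simp [mobius, one_sub_conj_mul_ne_zero ha hz, sub_eq_zero]

lemma differentiableOn_mobius (ha : ‖a‖ < 1) : DifferentiableOn ℂ (mobius a) (ball 0 1) :=
  DifferentiableOn.div (by fun_prop) (by fun_prop)
    fun z hz => one_sub_conj_mul_ne_zero ha (mem_ball_zero_iff.1 hz)

lemma mapsTo_mobius (ha : ‖a‖ < 1) : MapsTo (mobius a) (ball 0 1) (ball 0 1) := fun z hz => by
  rw [mem_ball_zero_iff] at hz ⊢
  exact norm_mobius_lt_one ha hz

lemma norm_moeb (a z : ℂ) : ‖moeb a z‖ = ‖mobius a z‖ := by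
  unfold moeb mobius
  split_ifs with h
  · simp [h]
  · rw [norm_mul, norm_div, Complex.norm_real, norm_norm, div_self (norm_ne_zero_iff.2 h), one_mul]

end Mobius

section BoundedOnDisk

variable {f : ℂ → ℂ} {C : ℝ}

lemma exists_eq_mobius_mul (hf : DifferentiableOn ℂ f (ball 0 1))
    (hC : ∀ z ∈ ball (0 : ℂ) 1, ‖f z‖ ≤ C) {a : ℂ} (ha : ‖a‖ < 1) (hfa : f a = 0) :
    ∃ g : ℂ → ℂ, DifferentiableOn ℂ g (ball 0 1) ∧ (∀ z ∈ ball (0 : ℂ) 1, ‖g z‖ ≤ C) ∧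
      ∀ z ∈ ball (0 : ℂ) 1, f z = mobius a z * g z := by
  have ha' : ‖-a‖ < 1 := by rwa [norm_neg]
  set h := f ∘ mobius (-a)
  have hh : DifferentiableOn ℂ h (ball 0 1) :=
    hf.comp (differentiableOn_mobius ha') (mapsTo_mobius ha')
  have h0 : h 0 = 0 := by simpa [h, mobius] using hfa
  refine ⟨dslope h 0 ∘ mobius a, ?_, fun z hz => ?_, fun z hz => ?_⟩
  · exact ((Complex.differentiableOn_dslope (ball_mem_nhds _ one_pos)).2 hh).comp
      (differentiableOn_mobius ha) (mapsTo_mobius ha)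
  · have hmaps : MapsTo h (ball 0 1) (closedBall (h 0) C) := fun w hw => by
      rw [h0, mem_closedBall_zero_iff]
      exact hC _ (mapsTo_mobius ha' hw)
    simpa using Complex.norm_dslope_le_div_of_mapsTo_ball hh hmaps (mapsTo_mobius ha hz)
  · have hslope := sub_smul_dslope h 0 (mobius a z)
    rw [h0, sub_zero, sub_zero, smul_eq_mul] at hslope
    rw [Function.comp_apply, hslope]
    simp [h, mobius_neg_mobius ha (mem_ball_zero_iff.1 hz)]

lemma norm_le_mul_prod_norm_mobius {ι : Type*} {a : ι → ℂ} (ha : ∀ i, ‖a i‖ < 1)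
    (s : Finset ι) (hs : InjOn a s) (hf : DifferentiableOn ℂ f (ball 0 1))
    (hC : ∀ z ∈ ball (0 : ℂ) 1, ‖f z‖ ≤ C) (hzero : ∀ i ∈ s, f (a i) = 0)
    {z : ℂ} (hz : ‖z‖ < 1) :
    ‖f z‖ ≤ C * ∏ i ∈ s, ‖mobius (a i) z‖ := by
  classical
  induction s using Finset.induction_on generalizing f with
  | empty => simpa using hC z (mem_ball_zero_iff.2 hz)
  | insert j s hj ih =>
    obtain ⟨g, hg, hgC, hfg⟩ :=
      exists_eq_mobius_mul hf hC (ha j) (hzero j (Finset.mem_insert_self j s))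
    have hgzero : ∀ i ∈ s, g (a i) = 0 := fun i hi => by
      have hij : a i ≠ a j := fun h =>
        hj (hs (Finset.mem_insert_of_mem hi) (Finset.mem_insert_self j s) h ▸ hi)
      have hfi := hzero i (Finset.mem_insert_of_mem hi)
      rw [hfg _ (mem_ball_zero_iff.2 (ha i))] at hfi
      exact (mul_eq_zero.1 hfi).resolve_left
        ((mobius_eq_zero_iff (ha j) (ha i)).not.2 hij)
    have hgz := ih (hs.mono (Finset.coe_subset.2 (Finset.subset_insert j s))) hg hgC hgzero
    rw [hfg z (mem_ball_zero_iff.2 hz), norm_mul, Finset.prod_insert hj]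
    calc ‖mobius (a j) z‖ * ‖g z‖
        ≤ ‖mobius (a j) z‖ * (C * ∏ i ∈ s, ‖mobius (a i) z‖) := by gcongr
      _ = C * (‖mobius (a j) z‖ * ∏ i ∈ s, ‖mobius (a i) z‖) := by ring

end BoundedOnDisk

lemma le_norm_tprod_of_forall_le_norm_prod {ι R : Type*} [NormedCommRing R] [NormOneClass R]
    {f : ι → R} {c : ℝ} (hc : c ≤ 1) (h : ∀ s : Finset ι, c ≤ ‖∏ i ∈ s, f i‖) :
    c ≤ ‖∏' i, f i‖ := by
  by_cases hf : Multipliable f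
  · exact ge_of_tendsto' ((continuous_norm.tendsto _).comp hf.hasProd) h
  · rwa [tprod_eq_one_of_not_multipliable hf, norm_one]

lemma IsInterpolatingSeq.exists_le_norm_bprod {Λ : ℕ → ℂ} (hint : IsInterpolatingSeq Λ)
    (hinj : Function.Injective Λ) (hmem : ∀ n, Λ n ∈ unitDisk) {A B : Set ℕ}
    (hAB : Disjoint A B) :
    ∃ η : ℝ, 0 < η ∧ ∀ n ∈ B, η ≤ ‖bprod Λ A (Λ n)‖ := by
  classical
  have hmem' : ∀ n, ‖Λ n‖ < 1 := fun n => mem_ball_zero_iff.1 (hmem n)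
  obtain ⟨f, ⟨hf, C, hC⟩, hfΛ⟩ := hint (B.indicator 1) ⟨1, fun n => by
    by_cases hn : n ∈ B <;> simp [hn]⟩
  have hC' : ∀ z ∈ ball (0 : ℂ) 1, ‖f z‖ ≤ max C 1 :=
    fun z hz => (hC z hz).trans (le_max_left _ _)
  have hpos : 0 < max C 1 := lt_max_of_lt_right one_pos
  refine ⟨(max C 1)⁻¹, inv_pos.2 hpos, fun n hn => ?_⟩
  refine le_norm_tprod_of_forall_le_norm_prod (inv_le_one_of_one_le₀ (le_max_right _ _)) fun s => ?_
  have hzero : ∀ k ∈ s, f (Λ k) = 0 := fun k _ => by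
    simp [hfΛ, Set.disjoint_left.1 hAB k.2]
  have := norm_le_mul_prod_norm_mobius (a := fun k : A => Λ k) (fun k => hmem' k) s
    (hinj.comp Subtype.val_injective).injOn hf hC' hzero (hmem' n)
  rw [hfΛ, Set.indicator_of_mem hn, Pi.one_apply, norm_one] at this
  rw [inv_le_iff_one_le_mul₀' hpos, Complex.norm_prod]
  simpa only [norm_moeb] using this

theorem stmt11_general (Λ : ℕ → ℂ) (hinj : Function.Injective Λ)
    (hmem : ∀ n, Λ n ∈ unitDisk)
    (hint : IsInterpolatingSeq Λ)
    (Λ₀ Λ₁ : Set ℕ) (hdisj : Disjoint Λ₀ Λ₁) :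
    ∃ η : ℝ, 0 < η ∧
      (∀ n ∈ Λ₁, η ≤ ‖bprod Λ Λ₀ (Λ n)‖) ∧
      (∀ n ∈ Λ₀, η ≤ ‖bprod Λ Λ₁ (Λ n)‖) := by
  obtain ⟨η₀, hη₀, h₀⟩ := hint.exists_le_norm_bprod hinj hmem hdisj
  obtain ⟨η₁, hη₁, h₁⟩ := hint.exists_le_norm_bprod hinj hmem hdisj.symm
  exact ⟨min η₀ η₁, lt_min hη₀ hη₁, fun n hn => (min_le_left _ _).trans (h₀ n hn),
    fun n hn => (min_le_right _ _).trans (h₁ n hn)⟩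

theorem stmt11 (Λ : ℕ → ℂ) (hinj : Function.Injective Λ)
    (hmem : ∀ n, Λ n ∈ unitDisk)
    (hBl : Summable (fun n => 1 - ‖Λ n‖))
    (hint : IsInterpolatingSeq Λ)
    (Λ₀ Λ₁ : Set ℕ) (hpart : Λ₀ ∪ Λ₁ = Set.univ) (hdisj : Disjoint Λ₀ Λ₁) :
    ∃ η : ℝ, 0 < η ∧
      (∀ n ∈ Λ₁, η ≤ ‖bprod Λ Λ₀ (Λ n)‖) ∧
      (∀ n ∈ Λ₀, η ≤ ‖bprod Λ Λ₁ (Λ n)‖) :=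
  stmt11_general Λ hinj hmem hint Λ₀ Λ₁ hdisj
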